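/- Let n, r, s ≥ 0 be integers, p a prime, and w ∈ ℚ[X] an integer-valued polynomial of degree t ≥ 0. Then ∑_{i ≥ 0, i ≡ r mod p^s} (−1)^i C(n,i) w((i−r)/p^s) ≡ 0 mod p^m, where m = max{0, ⌈(n − (t+1)p^s + 1)/φ(p^s)⌉}. (Weighted Weisman–Fleck congruence.) -/

import Mathlib

open Polynomial Finset

namespace WF

variable {p : ℕ} (hp : p.Prime)

/-- iterated contract coefficient -/
lemma ct_iter_coeff (hp : p.Prime) (s : ℕ) (f : Polynomial ℤ) (k : ℕ) :
    ((Polynomial.contract p)^[s] f).coeff k = f.coeff (k * p ^ s) := by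
  induction s generalizing f k with
  | zero => simp
  | succ s ih =>
      rw [Function.iterate_succ_apply, ih, coeff_contract hp.ne_zero, pow_succ, mul_assoc]

lemma ct_add (hp : p.Prime) (f g : Polynomial ℤ) :
    Polynomial.contract p (f + g) = Polynomial.contract p f + Polynomial.contract p g := by
  ext k; simp [coeff_contract hp.ne_zero]

lemma ct_smul (hp : p.Prime) (z : ℤ) (f : Polynomial ℤ) :
    Polynomial.contract p (z • f) = z • Polynomial.contract p f := by
  ext k; simp [coeff_contract hp.ne_zero]

lemma ct_Cmul (hp : p.Prime) (z : ℤ) (f : Polynomial ℤ) :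
    Polynomial.contract p (Polynomial.C z * f) = Polynomial.C z * Polynomial.contract p f := by
  ext k; simp [coeff_contract hp.ne_zero]

lemma ct_Xpow_mul (hp : p.Prime) (f : Polynomial ℤ) :
    Polynomial.contract p (X ^ p * f) = X * Polynomial.contract p f := by
  ext k
  rw [coeff_contract hp.ne_zero, mul_comm (X ^ p) f, coeff_mul_X_pow']
  cases k with
  | zero =>
      have h0 : ¬ (p ≤ 0 * p) := by have := hp.pos; omega
      rw [if_neg h0]
      rw [mul_comm X _, ← pow_one (X : Polynomial ℤ), coeff_mul_X_pow']
      simp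
  | succ k =>
      have h1 : p ≤ (k+1) * p := Nat.le_mul_of_pos_left p k.succ_pos
      rw [if_pos h1, coeff_X_mul, coeff_contract hp.ne_zero]
      congr 1
      have := hp.pos
      simp [Nat.succ_mul]


/-- The filtration submodule: span of `p^a (X-1)^b h` with `e*a + w*b ≥ c`. -/
noncomputable def MM (p e w c : ℕ) : Submodule ℤ (Polynomial ℤ) :=
  Submodule.span ℤ {f | ∃ a b h, c ≤ e * a + w * b ∧
    f = Polynomial.C ((p : ℤ) ^ a) * (X - 1) ^ b * h}

lemma mem_MM_of {p e w c a b : ℕ} (h : Polynomial ℤ) (hab : c ≤ e * a + w * b) :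
    Polynomial.C ((p : ℤ) ^ a) * (X - 1) ^ b * h ∈ MM p e w c :=
  Submodule.subset_span ⟨a, b, h, hab, rfl⟩

lemma MM_transfer {p e w c e' w' c' : ℕ}
    (H : ∀ a b : ℕ, c ≤ e * a + w * b → c' ≤ e' * a + w' * b) :
    MM p e w c ≤ MM p e' w' c' := by
  apply Submodule.span_mono
  rintro f ⟨a, b, h, hab, rfl⟩
  exact ⟨a, b, h, H a b hab, rfl⟩

lemma MM_mono {p e w c c' : ℕ} (hcc : c ≤ c') : MM p e w c' ≤ MM p e w c :=
  MM_transfer fun a b hab => le_trans hcc hab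

lemma mem_MM_all {p e w : ℕ} (f : Polynomial ℤ) : f ∈ MM p e w 0 := by
  have := mem_MM_of (p := p) (e := e) (w := w) (c := 0) (a := 0) (b := 0) f (by simp)
  simpa using this

lemma MM_mul_X_sub_one {p e w c : ℕ} {f : Polynomial ℤ} (hf : f ∈ MM p e w c) :
    (X - 1) * f ∈ MM p e w (c + w) := by
  refine Submodule.span_induction ?_ ?_ ?_ ?_ hf
  · rintro f ⟨a, b, h, hab, rfl⟩
    have : (X - 1) * (Polynomial.C ((p:ℤ) ^ a) * (X - 1) ^ b * h)
        = Polynomial.C ((p:ℤ) ^ a) * (X - 1) ^ (b + 1) * h := by ring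
    rw [this]
    exact mem_MM_of h (by rw [mul_add, mul_one]; omega)
  · simp
  · intro x y _ _ hx hy
    rw [mul_add]; exact add_mem hx hy
  · intro z x _ hx
    rw [mul_smul_comm]; exact Submodule.smul_mem _ _ hx

lemma MM_mul_p {p e w c : ℕ} {f : Polynomial ℤ} (hf : f ∈ MM p e w c) :
    Polynomial.C (p : ℤ) * f ∈ MM p e w (c + e) := by
  refine Submodule.span_induction ?_ ?_ ?_ ?_ hf
  · rintro f ⟨a, b, h, hab, rfl⟩
    have : Polynomial.C (p:ℤ) * (Polynomial.C ((p:ℤ) ^ a) * (X - 1) ^ b * h)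
        = Polynomial.C ((p:ℤ) ^ (a + 1)) * (X - 1) ^ b * h := by
      rw [pow_succ, Polynomial.C_mul]; ring
    rw [this]
    exact mem_MM_of h (by rw [mul_add, mul_one]; omega)
  · simp
  · intro x y _ _ hx hy
    rw [mul_add]; exact add_mem hx hy
  · intro z x _ hx
    rw [mul_smul_comm]; exact Submodule.smul_mem _ _ hx

lemma MM_mul_Cpow {p e w c : ℕ} (a : ℕ) {f : Polynomial ℤ} (hf : f ∈ MM p e w c) :
    Polynomial.C ((p : ℤ) ^ a) * f ∈ MM p e w (c + e * a) := by
  induction a with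
  | zero => simpa using hf
  | succ a ih =>
      have h2 := MM_mul_p ih
      have : Polynomial.C (p:ℤ) * (Polynomial.C ((p:ℤ) ^ a) * f)
          = Polynomial.C ((p:ℤ) ^ (a+1)) * f := by
        rw [pow_succ, Polynomial.C_mul]; ring
      rw [this] at h2
      have : c + e * a + e = c + e * (a + 1) := by ring
      rwa [this] at h2

/-- The key identity `(X-1)^p = X^p - 1 - p (X-1) u`. -/
lemma key_u (hp : p.Prime) : ∃ u : Polynomial ℤ,
    (X - 1 : Polynomial ℤ) ^ p = X ^ p - 1 - Polynomial.C (p : ℤ) * ((X - 1) * u) := by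
  refine ⟨∑ i ∈ Finset.Ico 1 p, (X - 1) ^ (i - 1) * Polynomial.C ((p.choose i / p : ℕ) : ℤ), ?_⟩
  have hpow : (X : Polynomial ℤ) ^ p = ∑ i ∈ Finset.range (p + 1),
      (X - 1) ^ i * 1 ^ (p - i) * (p.choose i : Polynomial ℤ) := by
    conv_lhs => rw [show (X : Polynomial ℤ) = (X - 1) + 1 by ring]
    exact add_pow (X - 1 : Polynomial ℤ) 1 p
  have hsum : ∑ i ∈ Finset.range (p + 1),
      (X - 1 : Polynomial ℤ) ^ i * 1 ^ (p - i) * (p.choose i : Polynomial ℤ)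
      = (∑ i ∈ Finset.Ico 1 p, (X - 1) ^ i * (p.choose i : Polynomial ℤ)) + (X - 1) ^ p + 1 := by
    rw [Finset.sum_range_succ]
    rw [Finset.range_eq_Ico, Finset.sum_eq_sum_Ico_succ_bot hp.pos]
    simp [Nat.choose_self]
    ring
  have hC : Polynomial.C (p : ℤ) * ((X - 1 : Polynomial ℤ) *
      ∑ i ∈ Finset.Ico 1 p, (X - 1) ^ (i - 1) * Polynomial.C ((p.choose i / p : ℕ) : ℤ))
      = ∑ i ∈ Finset.Ico 1 p, (X - 1) ^ i * (p.choose i : Polynomial ℤ) := by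
    rw [Finset.mul_sum, Finset.mul_sum]
    refine Finset.sum_congr rfl ?_
    intro i hi
    rw [Finset.mem_Ico] at hi
    have hdvd : p ∣ p.choose i := hp.dvd_choose_self (by omega) hi.2
    have hch : (p.choose i : ℤ) = (p : ℤ) * ((p.choose i / p : ℕ) : ℤ) := by
      rw [← Nat.cast_mul, Nat.mul_div_cancel' hdvd]
    have hxp : (X - 1 : Polynomial ℤ) ^ i = (X - 1) * (X - 1) ^ (i - 1) := by
      conv_lhs => rw [show i = (i - 1) + 1 by omega]
      ring
    rw [hxp, show ((p.choose i : ℕ) : Polynomial ℤ) = Polynomial.C ((p.choose i : ℕ) : ℤ) by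
      simp, hch, Polynomial.C_mul]
    ring
  rw [hpow, hsum, ← hC]
  ring


lemma stepL (hp : p.Prime) : ∀ b : ℕ, ∀ f : Polynomial ℤ,
    Polynomial.contract p ((X - 1) ^ b * f) ∈ MM p (p - 1) p (b - (p - 1)) := by
  intro b
  induction b using Nat.strong_induction_on with
  | _ b ih =>
    intro f
    rcases lt_or_ge b p with hb | hb
    · have h0 : b - (p-1) = 0 := by have := hp.two_le; omega
      rw [h0]; exact mem_MM_all _
    · obtain ⟨u, hu⟩ := key_u hp
      have hsplit : (X - 1 : Polynomial ℤ) ^ b * f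
          = X ^ p * ((X - 1) ^ (b - p) * f) - (X - 1) ^ (b - p) * f
            - Polynomial.C (p : ℤ) * ((X - 1) ^ (b - p + 1) * (u * f)) := by
        have hb' : (X - 1 : Polynomial ℤ) ^ b = (X - 1) ^ (b - p) * (X - 1) ^ p := by
          rw [← pow_add]; congr 1; omega
        have hb2 : (X - 1 : Polynomial ℤ) ^ (b - p + 1) = (X - 1) ^ (b - p) * (X - 1) := by
          ring
        rw [hb', hu, hb2]; ring
      rw [hsplit]
      have hsub : ∀ g h : Polynomial ℤ, Polynomial.contract p (g - h)
          = Polynomial.contract p g - Polynomial.contract p h := by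
        intro g h
        have := ct_add hp (g - h) h
        simp only [sub_add_cancel] at this
        linear_combination -this
      rw [hsub, hsub, ct_Xpow_mul hp, ct_Cmul hp]
      have hcomb : X * Polynomial.contract p ((X - 1) ^ (b - p) * f)
            - Polynomial.contract p ((X - 1) ^ (b - p) * f)
            - Polynomial.C (p:ℤ) * Polynomial.contract p ((X - 1) ^ (b - p + 1) * (u * f))
          = (X - 1) * Polynomial.contract p ((X - 1) ^ (b - p) * f)
            - Polynomial.C (p:ℤ) * Polynomial.contract p ((X - 1) ^ (b - p + 1) * (u * f)) := by
        ring
      rw [hcomb]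
      have h1 := ih (b - p) (by have := hp.two_le; omega) f
      have h2 := ih (b - p + 1) (by have := hp.two_le; omega) (u * f)
      have h2p := hp.two_le
      refine sub_mem (MM_mono ?_ (MM_mul_X_sub_one h1)) (MM_mono ?_ (MM_mul_p h2)) <;> omega

lemma stepS (hp : p.Prime) (s c : ℕ) (f : Polynomial ℤ)
    (hf : f ∈ MM p (Nat.totient (p ^ s)) (p ^ s) c) :
    Polynomial.contract p f ∈
      MM p (Nat.totient (p ^ (s+1))) (p ^ (s+1)) (c - (p ^ (s+1) - p ^ s)) := by
  set E := Nat.totient (p ^ s) with hE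
  set P := p ^ s with hP
  have hEP : E ≤ P * (p - 1) := by
    have h1 : E ≤ P := Nat.totient_le _
    have h2 : 1 ≤ p - 1 := by have := hp.two_le; omega
    calc E ≤ P := h1
      _ = P * 1 := (mul_one P).symm
      _ ≤ P * (p - 1) := Nat.mul_le_mul_left P h2
  have hE' : Nat.totient (p ^ (s+1)) = P * (p - 1) := by
    rw [Nat.totient_prime_pow hp (Nat.succ_pos s)]
    simp [hP]
  have hW' : p ^ (s+1) = P * p := by rw [pow_succ]
  refine Submodule.span_induction ?_ ?_ ?_ ?_ hf
  · rintro g ⟨a, b, h, hab, rfl⟩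
    rw [mul_assoc, ct_Cmul hp]
    have h1 := stepL hp b h
    have h2 : Polynomial.contract p ((X - 1) ^ b * h)
        ∈ MM p (P * (p - 1)) (P * p) (P * (b - (p - 1))) := by
      refine MM_transfer ?_ h1
      intro a' b' hab'
      calc P * (b - (p-1)) ≤ P * ((p-1) * a' + p * b') := Nat.mul_le_mul_left P hab'
        _ = P * (p-1) * a' + P * p * b' := by ring
    have h3 := MM_mul_Cpow a h2
    rw [hE', hW']
    refine MM_mono ?_ h3
    clear_value E P
    have hb1 : P * (b - (p-1)) = P * b - P * (p - 1) := Nat.mul_sub P b (p-1)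
    have hEa : E * a ≤ P * (p - 1) * a := Nat.mul_le_mul_right a hEP
    have hPp : P * p - P = P * (p - 1) := by
      rw [Nat.mul_sub]; omega
    have key : c ≤ E * a + P * b := hab
    omega
  · have h0 : Polynomial.contract p (0 : Polynomial ℤ) = 0 := by
      ext k; simp [coeff_contract hp.ne_zero]
    rw [h0]; exact zero_mem _
  · intro x y _ _ hx hy
    rw [ct_add hp]; exact add_mem hx hy
  · intro z x _ hx
    rw [ct_smul hp]; exact Submodule.smul_mem _ _ hx


lemma mainMem (hp : p.Prime) (s b : ℕ) (f : Polynomial ℤ) :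
    (Polynomial.contract p)^[s] ((X - 1) ^ b * f)
      ∈ MM p (Nat.totient (p ^ s)) (p ^ s) (b - (p ^ s - 1)) := by
  induction s with
  | zero =>
      simpa [Nat.totient_one] using
        mem_MM_of (p := p) (e := 1) (w := 1) (c := b) (a := 0) (b := b) f (by simp)
  | succ s ih =>
      rw [Function.iterate_succ_apply']
      have h2 := stepS hp s _ _ ih
      refine MM_mono ?_ h2
      have h3 : p ^ s ≤ p ^ (s+1) := Nat.pow_le_pow_right hp.pos (by omega)
      have h4 : 1 ≤ p ^ s := Nat.one_le_pow _ _ hp.pos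
      omega

lemma extract (hp : p.Prime) (e w c : ℕ) (he : 0 < e) (f : Polynomial ℤ)
    (hf : f ∈ MM p e w c) (j : ℕ) :
    (p : ℤ) ^ ((c - w * j + (e - 1)) / e) ∣ (Polynomial.taylor 1 f).coeff j := by
  refine Submodule.span_induction ?_ ?_ ?_ ?_ hf
  · rintro g ⟨a, b, h, hab, rfl⟩
    rw [taylor_mul, taylor_mul]
    have h1 : Polynomial.taylor (1:ℤ) (Polynomial.C ((p:ℤ)^a)) = Polynomial.C ((p:ℤ)^a) := by
      simp [taylor_apply]
    have h2 : Polynomial.taylor (1:ℤ) ((X - 1)^b) = X ^ b := by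
      rw [taylor_apply, pow_comp, sub_comp, X_comp, one_comp]
      simp
    rw [h1, h2, mul_assoc, coeff_C_mul, mul_comm (X ^ b) _, coeff_mul_X_pow']
    rcases le_or_gt b j with hbj | hbj
    · rw [if_pos hbj]
      have haj : (c - w * j + (e - 1)) / e ≤ a := by
        have hwb : w * b ≤ w * j := Nat.mul_le_mul_left w hbj
        have hcw : c - w * j ≤ e * a := by omega
        have : (c - w * j + (e - 1)) / e < a + 1 := by
          rw [Nat.div_lt_iff_lt_mul he]
          have : (a + 1) * e = e * a + e := by ring
          omega
        omega
      exact Dvd.dvd.mul_right (pow_dvd_pow _ haj) _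
    · rw [if_neg (by omega)]
      simp
  · simp
  · intro x y _ _ hx hy
    rw [map_add, coeff_add]; exact dvd_add hx hy
  · intro z x _ hx
    rw [map_smul, coeff_smul, smul_eq_mul]
    exact hx.mul_left z


lemma ct_iter_sum (hp : p.Prime) (s : ℕ) {A : Finset ℕ} (g : ℕ → Polynomial ℤ) :
    (Polynomial.contract p)^[s] (∑ i ∈ A, g i) = ∑ i ∈ A, (Polynomial.contract p)^[s] (g i) := by
  ext k
  rw [ct_iter_coeff hp, finset_sum_coeff, finset_sum_coeff]
  exact Finset.sum_congr rfl fun i _ => (ct_iter_coeff hp s (g i) k).symm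

lemma ct_iter_Cmul (hp : p.Prime) (s : ℕ) (z : ℤ) (f : Polynomial ℤ) :
    (Polynomial.contract p)^[s] (Polynomial.C z * f)
      = Polynomial.C z * (Polynomial.contract p)^[s] f := by
  ext k
  rw [ct_iter_coeff hp, coeff_C_mul, coeff_C_mul, ct_iter_coeff hp]

lemma ct_iter_X_pow (hp : p.Prime) (s e : ℕ) :
    (Polynomial.contract p)^[s] ((X : Polynomial ℤ) ^ e)
      = if p ^ s ∣ e then (X : Polynomial ℤ) ^ (e / p ^ s) else 0 := by
  have hq : 0 < p ^ s := pow_pos hp.pos s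
  by_cases hdvd : p ^ s ∣ e
  · rw [if_pos hdvd]
    ext k
    rw [ct_iter_coeff hp, coeff_X_pow, coeff_X_pow]
    congr 1
    simp only [eq_iff_iff]
    obtain ⟨d, rfl⟩ := hdvd
    rw [Nat.mul_div_cancel_left _ hq]
    constructor
    · intro h
      exact Nat.eq_of_mul_eq_mul_right hq (by rw [h]; ring)
    · intro h
      rw [h]; ring
  · rw [if_neg hdvd]
    ext k
    rw [ct_iter_coeff hp, coeff_X_pow, coeff_zero, if_neg]
    intro h
    exact hdvd ⟨k, by rw [← h]; ring⟩

lemma arith_dvd (q r0 i : ℕ) (hq : 0 < q) (hr0 : r0 < q) :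
    q ∣ i + (q - r0) ↔ i % q = r0 := by
  constructor
  · rintro ⟨k, hk⟩
    have hk1 : 1 ≤ k := by
      rcases Nat.eq_zero_or_pos k with h | h
      · rw [h, Nat.mul_zero] at hk; omega
      · exact h
    have hmul : q * (k - 1) = q * k - q * 1 := Nat.mul_sub q k 1
    have hge : q * 1 ≤ q * k := Nat.mul_le_mul_left q hk1
    have hi : i = q * (k - 1) + r0 := by omega
    rw [hi, Nat.mul_add_mod, Nat.mod_eq_of_lt hr0]
  · intro h
    have hmod := Nat.div_add_mod i q
    refine ⟨i / q + 1, ?_⟩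
    have : q * (i / q + 1) = q * (i / q) + q := by ring
    omega

lemma arith_quot (q r0 i : ℕ) (hq : 0 < q) (hr0 : r0 < q) (hi : i % q = r0) :
    (i + (q - r0)) / q = i / q + 1 := by
  have hmod := Nat.div_add_mod i q
  have heq : i + (q - r0) = q * (i / q + 1) := by
    have : q * (i / q + 1) = q * (i / q) + q := by ring
    omega
  rw [heq, Nat.mul_div_cancel_left _ hq]


lemma sub_one_pow_expand (n : ℕ) :
    ((X : Polynomial ℤ) - 1) ^ n
      = ∑ i ∈ Finset.range (n + 1),
          Polynomial.C ((-1 : ℤ) ^ (n - i) * (n.choose i : ℤ)) * X ^ i := by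
  have h := add_pow (X : Polynomial ℤ) (-1) n
  have hx : ((X : Polynomial ℤ) + (-1)) = X - 1 := by ring
  rw [hx] at h
  rw [h]
  refine Finset.sum_congr rfl fun i _ => ?_
  have h1 : ((-1 : Polynomial ℤ)) ^ (n - i) = Polynomial.C ((-1 : ℤ) ^ (n - i)) := by
    rw [map_pow, map_neg, map_one]
  have h2 : ((n.choose i : ℕ) : Polynomial ℤ) = Polynomial.C ((n.choose i : ℤ)) := by
    simp
  rw [h1, h2, Polynomial.C_mul]
  ring

lemma tprime_eq (hp : p.Prime) (n r0 s j : ℕ) (hr0 : r0 < p ^ s) :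
    (Polynomial.taylor (1:ℤ)
        ((Polynomial.contract p)^[s] ((X - 1) ^ n * X ^ (p ^ s - r0)))).coeff j
      = ∑ i ∈ (Finset.range (n+1)).filter (fun i => i % p ^ s = r0),
          (-1 : ℤ) ^ (n - i) * (n.choose i : ℤ) * ((i / p ^ s + 1).choose j : ℤ) := by
  set q := p ^ s with hq
  have hq0 : 0 < q := pow_pos hp.pos s
  have hF : ((X : Polynomial ℤ) - 1) ^ n * X ^ (q - r0)
      = ∑ i ∈ Finset.range (n + 1),
          Polynomial.C ((-1 : ℤ) ^ (n - i) * (n.choose i : ℤ)) * X ^ (i + (q - r0)) := by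
    rw [sub_one_pow_expand, Finset.sum_mul]
    exact Finset.sum_congr rfl fun i _ => by rw [pow_add]; ring
  rw [hF, ct_iter_sum hp, map_sum, finset_sum_coeff]
  have hterm : ∀ i ∈ Finset.range (n + 1),
      ((Polynomial.taylor (1:ℤ)) ((Polynomial.contract p)^[s]
        (Polynomial.C ((-1 : ℤ) ^ (n - i) * (n.choose i : ℤ)) * X ^ (i + (q - r0))))).coeff j
      = (if i % q = r0 then
          (-1 : ℤ) ^ (n - i) * (n.choose i : ℤ) * ((i / q + 1).choose j : ℤ) else 0) := by
    intro i _
    rw [ct_iter_Cmul hp, ct_iter_X_pow hp]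
    by_cases hc : i % q = r0
    · rw [if_pos ((arith_dvd q r0 i hq0 hr0).mpr hc), if_pos hc]
      rw [arith_quot q r0 i hq0 hr0 hc]
      rw [taylor_mul]
      have h1 : Polynomial.taylor (1:ℤ) (Polynomial.C ((-1 : ℤ) ^ (n - i) * (n.choose i : ℤ)))
          = Polynomial.C ((-1 : ℤ) ^ (n - i) * (n.choose i : ℤ)) := by simp [taylor_apply]
      have h2 : Polynomial.taylor (1:ℤ) ((X : Polynomial ℤ) ^ (i / q + 1))
          = (X + 1) ^ (i / q + 1) := by
        rw [taylor_apply, X_pow_comp]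
        simp
      rw [h1, h2, coeff_C_mul, coeff_X_add_one_pow]
    · rw [if_neg (fun hd => hc ((arith_dvd q r0 i hq0 hr0).mp hd)), if_neg hc]
      simp
  rw [Finset.sum_congr rfl hterm]
  exact (Finset.sum_filter _ _).symm


/-! ### Newton expansion over ℚ -/

noncomputable def Dl (v : Polynomial ℚ) : Polynomial ℚ := Polynomial.taylor 1 v - v

noncomputable def Bb (j : ℕ) : Polynomial ℚ :=
  Polynomial.C ((j.factorial : ℚ)⁻¹) * descPochhammer ℚ j

lemma Bb_zero : Bb 0 = 1 := by simp [Bb, descPochhammer_zero]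

lemma Bb_eval_nat (m j : ℕ) : (Bb j).eval (m : ℚ) = (m.choose j : ℚ) := by
  rw [Bb, eval_mul, eval_C, descPochhammer_eval_eq_descFactorial,
    Nat.descFactorial_eq_factorial_mul_choose]
  have hj : (j.factorial : ℚ) ≠ 0 := Nat.cast_ne_zero.mpr j.factorial_ne_zero
  push_cast
  field_simp

lemma taylor_one_comp (v : Polynomial ℚ) : Polynomial.taylor (1:ℚ) v = v.comp (X + 1) := by
  rw [taylor_apply, Polynomial.C_1]

lemma Dl_Bb_succ (j : ℕ) : Dl (Bb (j + 1)) = Bb j := by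
  have hD : (descPochhammer ℚ (j+1)).comp (X + 1) = (X + 1) * descPochhammer ℚ j := by
    have hinner : ((X : Polynomial ℚ) - 1).comp (X + 1) = X := by
      rw [sub_comp, X_comp, one_comp]; ring
    rw [descPochhammer_succ_left, mul_comp, X_comp, comp_assoc, hinner, comp_X]
  rw [Dl, Bb, Bb, taylor_one_comp, mul_comp, C_comp, hD, descPochhammer_succ_right]
  have hcast : ((j : ℚ[X])) = Polynomial.C ((j:ℚ)) := by simp
  rw [hcast]
  have hfac : ((j+1).factorial : ℚ)⁻¹ * ((j:ℚ) + 1) = ((j.factorial : ℚ))⁻¹ := by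
    rw [Nat.factorial_succ]
    have h1 : (j.factorial : ℚ) ≠ 0 := Nat.cast_ne_zero.mpr j.factorial_ne_zero
    have h2 : ((j:ℚ) + 1) ≠ 0 := by positivity
    push_cast
    field_simp
  calc Polynomial.C (((j+1).factorial : ℚ)⁻¹) * ((X + 1) * descPochhammer ℚ j)
        - Polynomial.C (((j+1).factorial : ℚ)⁻¹) * (descPochhammer ℚ j * (X - Polynomial.C (j:ℚ)))
      = Polynomial.C (((j+1).factorial : ℚ)⁻¹) * Polynomial.C ((j:ℚ) + 1)
          * descPochhammer ℚ j := by
        have hC : Polynomial.C ((j:ℚ) + 1) = (X + 1 : Polynomial ℚ) - (X - Polynomial.C ((j:ℚ))) := by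
          rw [Polynomial.C_add, Polynomial.C_1]; ring
        rw [hC]
        ring
      _ = Polynomial.C ((j.factorial : ℚ))⁻¹ * descPochhammer ℚ j := by
        rw [mul_assoc, ← mul_assoc (Polynomial.C (((j+1).factorial : ℚ)⁻¹)), ← Polynomial.C_mul, hfac]

lemma Dl_sub (a b : Polynomial ℚ) : Dl (a - b) = Dl a - Dl b := by
  rw [Dl, Dl, Dl, map_sub]; ring

lemma Dl_sum {A : Finset ℕ} (g : ℕ → Polynomial ℚ) :
    Dl (∑ j ∈ A, g j) = ∑ j ∈ A, Dl (g j) := by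
  rw [Dl, map_sum, ← Finset.sum_sub_distrib]
  rfl

lemma Dl_C_mul (c : ℚ) (v : Polynomial ℚ) : Dl (Polynomial.C c * v) = Polynomial.C c * Dl v := by
  rw [Dl, Dl, taylor_mul]
  have : Polynomial.taylor (1:ℚ) (Polynomial.C c) = Polynomial.C c := by simp [taylor_apply]
  rw [this]; ring


lemma Dl_natDegree_le (v : Polynomial ℚ) (t : ℕ) (hv : v.natDegree ≤ t + 1) :
    (Dl v).natDegree ≤ t := by
  rcases Nat.eq_zero_or_pos v.natDegree with h0 | h0
  · have : v = Polynomial.C (v.coeff 0) := Polynomial.eq_C_of_natDegree_le_zero (le_of_eq h0)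
    rw [Dl, taylor_one_comp, this]
    simp
  · have hvne : v ≠ 0 := fun h => by simp [h] at h0
    have hdc : (v.comp (X + 1)).natDegree = v.natDegree := by
      rw [natDegree_comp]
      have : (X + 1 : Polynomial ℚ).natDegree = 1 := by
        have : (X + 1 : Polynomial ℚ) = X + Polynomial.C 1 := by simp
        rw [this, natDegree_X_add_C]
      rw [this, mul_one]
    by_cases hzero : Dl v = 0
    · rw [hzero]; simp
    rw [Dl, taylor_one_comp] at hzero ⊢
    have hcne : v.comp (X + 1) ≠ 0 := by
      intro h
      rw [h] at hdc
      simp at hdc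
      omega
    have hdeg : (v.comp (X + 1)).degree = v.degree := by
      rw [degree_eq_natDegree hcne, degree_eq_natDegree hvne, hdc]
    have hlc : (v.comp (X + 1)).leadingCoeff = v.leadingCoeff := by
      have hX1 : (X + 1 : Polynomial ℚ).natDegree ≠ 0 := by
        have : (X + 1 : Polynomial ℚ) = X + Polynomial.C 1 := by simp
        rw [this, natDegree_X_add_C]
        omega
      rw [leadingCoeff_comp hX1]
      have : (X + 1 : Polynomial ℚ).leadingCoeff = 1 := by
        have : (X + 1 : Polynomial ℚ) = X + Polynomial.C 1 := by simp
        rw [this]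
        exact (monic_X_add_C (1:ℚ)).leadingCoeff
      rw [this, one_pow, mul_one]
    have hlt : (v.comp (X + 1) - v).degree < v.degree := hdeg ▸ degree_sub_lt hdeg hcne hlc
    have := natDegree_lt_natDegree hzero hlt
    omega

lemma const_of_Dl_eq_zero (g : Polynomial ℚ) (hDl : Dl g = 0) (h0 : g.eval 0 = 0) : g = 0 := by
  have hcomp : Polynomial.taylor (1:ℚ) g = g := by
    have := hDl
    rw [Dl, sub_eq_zero] at this
    exact this
  have heval : ∀ k : ℕ, g.eval (k : ℚ) = 0 := by
    intro k
    induction k with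
    | zero => simpa using h0
    | succ k ih =>
        have : g.eval ((k : ℚ) + 1) = (g.comp (X + 1)).eval (k : ℚ) := by
          rw [eval_comp]; simp
        rw [taylor_one_comp] at hcomp
        push_cast
        rw [this, hcomp, ih]
  apply Polynomial.eq_zero_of_infinite_isRoot
  apply Set.Infinite.mono (s := Set.range ((↑) : ℕ → ℚ))
  · rintro x ⟨k, rfl⟩
    exact heval k
  · exact Set.infinite_range_of_injective Nat.cast_injective

lemma newton : ∀ (t : ℕ) (v : Polynomial ℚ), v.natDegree ≤ t →
    v = ∑ j ∈ Finset.range (t + 1), Polynomial.C ((Dl^[j] v).eval 0) * Bb j := by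
  intro t
  induction t with
  | zero =>
      intro v hv
      have hc : v = Polynomial.C (v.coeff 0) := Polynomial.eq_C_of_natDegree_le_zero hv
      rw [Finset.sum_range_one, Bb_zero, mul_one, Function.iterate_zero_apply]
      conv_lhs => rw [hc]
      congr 1
      conv_rhs => rw [hc]
      simp
  | succ t ih =>
      intro v hv
      have hΔdeg : (Dl v).natDegree ≤ t := Dl_natDegree_le v t hv
      have hIH := ih (Dl v) hΔdeg
      set g := v - ∑ j ∈ Finset.range (t + 2), Polynomial.C ((Dl^[j] v).eval 0) * Bb j with hg
      have hDg : Dl g = 0 := by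
        rw [hg, Dl_sub, Dl_sum]
        have hterm : ∀ j ∈ Finset.range (t + 2),
            Dl (Polynomial.C ((Dl^[j] v).eval 0) * Bb j)
              = Polynomial.C ((Dl^[j] v).eval 0) * Dl (Bb j) := fun j _ => Dl_C_mul _ _
        rw [Finset.sum_congr rfl hterm]
        rw [Finset.sum_range_succ']
        have h00 : Dl (Bb 0) = 0 := by
          rw [Bb_zero, Dl, taylor_one_comp, one_comp, sub_self]
        rw [h00, mul_zero, add_zero]
        have hterm2 : ∀ j ∈ Finset.range (t + 1),
            Polynomial.C ((Dl^[j+1] v).eval 0) * Dl (Bb (j+1))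
              = Polynomial.C ((Dl^[j] (Dl v)).eval 0) * Bb j := by
          intro j _
          rw [Dl_Bb_succ, Function.iterate_succ_apply]
        rw [Finset.sum_congr rfl hterm2, ← hIH]
        ring
      have hg0 : g.eval 0 = 0 := by
        rw [hg, eval_sub, eval_finset_sum]
        have hterm : ∀ j ∈ Finset.range (t + 2),
            (Polynomial.C ((Dl^[j] v).eval 0) * Bb j).eval 0
              = if j = 0 then v.eval 0 else 0 := by
          intro j _
          rw [eval_mul, eval_C]
          have : (Bb j).eval 0 = ((Nat.choose 0 j : ℕ) : ℚ) := by
            have := Bb_eval_nat 0 j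
            simpa using this
          rw [this]
          cases j with
          | zero => simp
          | succ j => simp [Nat.choose_eq_zero_of_lt (Nat.succ_pos j)]
        rw [Finset.sum_congr rfl hterm, Finset.sum_ite_eq' (Finset.range (t+2)) 0 (fun _ => v.eval 0)]
        simp
      have := const_of_Dl_eq_zero g hDg hg0
      rw [hg] at this
      exact sub_eq_zero.mp this


lemma Dl_int_valued (v : Polynomial ℚ) (hv : ∀ a : ℤ, ∃ z : ℤ, v.eval ((a : ℤ) : ℚ) = z) :
    ∀ a : ℤ, ∃ z : ℤ, (Dl v).eval ((a : ℤ) : ℚ) = z := by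
  intro a
  obtain ⟨z1, hz1⟩ := hv (a + 1)
  obtain ⟨z2, hz2⟩ := hv a
  refine ⟨z1 - z2, ?_⟩
  rw [Dl, taylor_one_comp, eval_sub, eval_comp]
  simp only [eval_add, eval_X, eval_one]
  have : ((a : ℚ) + 1) = (((a + 1 : ℤ) : ℚ)) := by push_cast; ring
  rw [this, hz1, hz2]
  push_cast
  ring

lemma Dl_iter_int_valued (v : Polynomial ℚ) (hv : ∀ a : ℤ, ∃ z : ℤ, v.eval ((a : ℤ) : ℚ) = z)
    (j : ℕ) : ∀ a : ℤ, ∃ z : ℤ, (Dl^[j] v).eval ((a : ℤ) : ℚ) = z := by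
  induction j with
  | zero => exact hv
  | succ j ih =>
      rw [Function.iterate_succ_apply']
      exact Dl_int_valued _ ih

/-- ceiling arithmetic: the exponent in the theorem statement equals a ℕ ceiling division. -/
lemma ceil_toNat_eq (N : ℤ) (E : ℕ) (hE : 0 < E) :
    (max 0 ⌈(N : ℚ) / (E : ℚ)⌉).toNat = (N.toNat + (E - 1)) / E := by
  have hEQ : (0:ℚ) < (E:ℚ) := by exact_mod_cast hE
  rcases le_or_gt N 0 with hN | hN
  · have h1 : ⌈(N : ℚ) / (E : ℚ)⌉ ≤ 0 := by
      rw [show (0:ℤ) = ((0:ℤ)) from rfl, Int.ceil_le]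
      push_cast
      apply div_nonpos_of_nonpos_of_nonneg
      · exact_mod_cast hN
      · positivity
    have h2 : N.toNat = 0 := Int.toNat_of_nonpos hN
    rw [h2]
    have h4 : (0 + (E - 1)) / E = 0 := by
      apply Nat.div_eq_of_lt; omega
    rw [h4, max_eq_left h1]
    rfl
  · set x := N.toNat with hx
    have hxN : (x : ℤ) = N := Int.toNat_of_nonneg (le_of_lt hN)
    have hmod := Nat.div_add_mod (x + (E - 1)) E
    have hmlt : (x + (E - 1)) % E < E := Nat.mod_lt _ hE
    have hub : x ≤ E * ((x + (E - 1)) / E) := by omega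
    have hlb : E * ((x + (E - 1)) / E) < x + E := by omega
    set a := (x + (E - 1)) / E with ha
    have hubQ : (x : ℚ) ≤ (E : ℚ) * (a : ℚ) := by exact_mod_cast hub
    have hlbQ : (E : ℚ) * (a : ℚ) < (x : ℚ) + (E : ℚ) := by exact_mod_cast hlb
    have hNx : (N : ℚ) = (x : ℚ) := by
      rw [← hxN]; push_cast; ring
    have hceil : ⌈(N : ℚ) / (E : ℚ)⌉ = (a : ℤ) := by
      rw [Int.ceil_eq_iff]
      constructor
      · rw [lt_div_iff₀ hEQ, hNx]
        push_cast
        linarith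
      · rw [div_le_iff₀ hEQ, hNx]
        push_cast
        linarith
    rw [hceil]
    rw [max_eq_right (Int.natCast_nonneg a)]
    exact Int.toNat_natCast a

end WF

open WF

theorem stmt9 (p : ℕ) (hp : p.Prime) (n r s : ℕ)
    (w : Polynomial ℚ) (hw : ∀ a : ℤ, ∃ z : ℤ, w.eval ((a : ℤ) : ℚ) = z)
    (t : ℕ) (ht : w.natDegree = t) (hw0 : w ≠ 0) :
    ∃ z : ℤ,
      (∑ i ∈ (Finset.range (n + 1)).filter (fun i => i % p ^ s = r % p ^ s),
        (-1 : ℚ) ^ i * (n.choose i : ℚ) * w.eval (((i : ℚ) - (r : ℚ)) / (p : ℚ) ^ s))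
      = (p : ℚ) ^ ((max 0
          ⌈(((n : ℚ) - ((t : ℚ) + 1) * (p : ℚ) ^ s + 1) / (Nat.totient (p ^ s) : ℚ))⌉).toNat) * z := by
  classical
  set q := p ^ s with hq
  have hq0 : 0 < q := pow_pos hp.pos s
  set r0 := r % q with hr0d
  have hr0 : r0 < q := Nat.mod_lt _ hq0
  set K := r / q with hK
  set E := Nat.totient q with hE
  have hE0 : 0 < E := Nat.totient_pos.mpr hq0
  set Φ := (Finset.range (n + 1)).filter (fun i => i % q = r0) with hΦ
  have hps : ((p : ℚ)) ^ s = ((q : ℕ) : ℚ) := by rw [hq]; push_cast; ring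
  -- the exponent
  set N : ℤ := (n : ℤ) - ((t : ℤ) + 1) * (q : ℤ) + 1 with hN
  set m := (N.toNat + (E - 1)) / E with hm
  have hexp : (max 0
      ⌈(((n : ℚ) - ((t : ℚ) + 1) * (p : ℚ) ^ s + 1) / ((E : ℕ) : ℚ))⌉).toNat = m := by
    have harg : ((n : ℚ) - ((t : ℚ) + 1) * (p : ℚ) ^ s + 1) = ((N : ℤ) : ℚ) := by
      rw [hps, hN]; push_cast; ring
    rw [harg, hm]
    exact ceil_toNat_eq N E hE0
  -- the integer-side polynomial and divisibility
  set G := (Polynomial.contract p)^[s]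
      (((Polynomial.X : Polynomial ℤ) - 1) ^ n * Polynomial.X ^ (q - r0)) with hG
  have hmem : G ∈ MM p E q (n - (q - 1)) := by
    have h := mainMem hp s n ((Polynomial.X : Polynomial ℤ) ^ (q - r0))
    rw [← hq] at h
    exact h
  have hdvdall : ∀ j : ℕ, (p : ℤ) ^ (((n - (q-1)) - q * j + (E - 1)) / E)
      ∣ (Polynomial.taylor (1:ℤ) G).coeff j :=
    fun j => extract hp E q _ hE0 G hmem j
  have hdvd : ∀ j ∈ Finset.range (t + 1), (p:ℤ) ^ m ∣ (Polynomial.taylor (1:ℤ) G).coeff j := by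
    intro j hj
    rw [Finset.mem_range] at hj
    refine dvd_trans (pow_dvd_pow _ ?_) (hdvdall j)
    rw [hm]
    apply Nat.div_le_div_right
    apply Nat.add_le_add_right
    have hqj : q * j ≤ q * t := Nat.mul_le_mul_left q (by omega)
    have hqt : ((t : ℤ) + 1) * (q : ℤ) = ((q * t : ℕ) : ℤ) + (q : ℤ) := by push_cast; ring
    omega
  -- identification of the taylor coefficients
  have htp : ∀ j : ℕ, (Polynomial.taylor (1:ℤ) G).coeff j
      = ∑ i ∈ Φ, (-1 : ℤ) ^ (n - i) * (n.choose i : ℤ) * ((i / q + 1).choose j : ℤ) := by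
    intro j
    have h := tprime_eq hp n r0 s j (by rw [← hq]; exact hr0)
    rw [← hq] at h
    exact h
  -- the shifted polynomial and its Newton expansion
  set v := w.comp (Polynomial.X - Polynomial.C ((K : ℚ) + 1)) with hv
  have hvdeg : v.natDegree = t := by
    rw [hv, Polynomial.natDegree_comp, Polynomial.natDegree_X_sub_C, mul_one, ht]
  have hviv : ∀ a : ℤ, ∃ z : ℤ, v.eval ((a : ℤ) : ℚ) = z := by
    intro a
    obtain ⟨z, hz⟩ := hw (a - K - 1)
    refine ⟨z, ?_⟩
    rw [hv, Polynomial.eval_comp]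
    simp only [Polynomial.eval_sub, Polynomial.eval_X, Polynomial.eval_C]
    have : ((a : ℚ)) - ((K:ℚ) + 1) = (((a - K - 1 : ℤ) : ℤ) : ℚ) := by push_cast; ring
    rw [this, hz]
  have hnewt := newton t v (le_of_eq hvdeg)
  have hzc : ∀ j : ℕ, ∃ z : ℤ, (Dl^[j] v).eval 0 = (z : ℚ) := by
    intro j
    obtain ⟨z, hz⟩ := Dl_iter_int_valued v hviv j 0
    exact ⟨z, by simpa using hz⟩
  choose zc hzcspec using hzc
  -- evaluate the weight at the points of the sum
  have hval : ∀ i ∈ Φ, w.eval (((i : ℚ) - (r : ℚ)) / (p : ℚ) ^ s)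
      = ∑ j ∈ Finset.range (t + 1), (zc j : ℚ) * (((i / q + 1).choose j : ℕ) : ℚ) := by
    intro i hi
    rw [hΦ, Finset.mem_filter] at hi
    have hi2 : i % q = r0 := hi.2
    have hiq : q * (i / q) + r0 = i := by rw [← hi2]; exact Nat.div_add_mod i q
    have hrq : q * K + r0 = r := by rw [hK, hr0d]; exact Nat.div_add_mod r q
    have hiqQ : (q : ℚ) * ((i / q : ℕ) : ℚ) + (r0 : ℚ) = (i : ℚ) := by exact_mod_cast hiq
    have hrqQ : (q : ℚ) * ((K : ℕ) : ℚ) + (r0 : ℚ) = (r : ℚ) := by exact_mod_cast hrq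
    have hqne : ((q : ℕ) : ℚ) ≠ 0 := by positivity
    have harg : ((i : ℚ) - (r : ℚ)) / (p : ℚ) ^ s = ((i / q : ℕ) : ℚ) - (K : ℚ) := by
      rw [hps, div_eq_iff hqne]
      linear_combination hrqQ - hiqQ
    have heval : w.eval (((i / q : ℕ) : ℚ) - (K : ℚ)) = v.eval (((i / q + 1 : ℕ) : ℚ)) := by
      rw [hv, Polynomial.eval_comp]
      simp only [Polynomial.eval_sub, Polynomial.eval_X, Polynomial.eval_C]
      congr 1
      push_cast
      ring
    rw [harg, heval]
    conv_lhs => rw [hnewt]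
    rw [Polynomial.eval_finset_sum]
    refine Finset.sum_congr rfl fun j _ => ?_
    rw [Polynomial.eval_mul, Polynomial.eval_C, hzcspec j, Bb_eval_nat]
  -- swap the sums
  have hswap : (∑ i ∈ Φ, (-1 : ℚ) ^ i * (n.choose i : ℚ)
        * w.eval (((i : ℚ) - (r : ℚ)) / (p : ℚ) ^ s))
      = ∑ j ∈ Finset.range (t + 1), (zc j : ℚ) *
          ∑ i ∈ Φ, (-1 : ℚ) ^ i * (n.choose i : ℚ) * (((i / q + 1).choose j : ℕ) : ℚ) := by
    rw [Finset.sum_congr rfl (fun i hi => by rw [hval i hi])]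
    rw [Finset.sum_congr rfl (fun i _ => Finset.mul_sum _ _ _)]
    rw [Finset.sum_comm]
    refine Finset.sum_congr rfl fun j _ => ?_
    rw [Finset.mul_sum]
    refine Finset.sum_congr rfl fun i _ => by ring
  -- the integer inner sums
  set U : ℕ → ℤ := fun j => ∑ i ∈ Φ, (-1 : ℤ) ^ i * (n.choose i : ℤ) * ((i / q + 1).choose j : ℤ)
    with hU
  have hUcast : ∀ j, ((U j : ℤ) : ℚ)
      = ∑ i ∈ Φ, (-1 : ℚ) ^ i * (n.choose i : ℚ) * (((i / q + 1).choose j : ℕ) : ℚ) := by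
    intro j
    rw [hU]
    push_cast
    ring
  have hUdvd : ∀ j ∈ Finset.range (t + 1), (p : ℤ) ^ m ∣ U j := by
    intro j hj
    have hUt : U j = (-1 : ℤ) ^ n * (Polynomial.taylor (1:ℤ) G).coeff j := by
      rw [htp j, hU, Finset.mul_sum]
      refine Finset.sum_congr rfl fun i hi => ?_
      rw [hΦ, Finset.mem_filter, Finset.mem_range] at hi
      have hin : i ≤ n := by omega
      have hsplit : (-1 : ℤ) ^ n = (-1) ^ (n - i) * (-1) ^ i := by
        rw [← pow_add]
        congr 1
        omega
      have hsq : (-1 : ℤ) ^ (n - i) * (-1 : ℤ) ^ (n - i) = 1 := by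
        rw [← pow_add]
        exact Even.neg_one_pow ⟨n - i, rfl⟩
      calc (-1 : ℤ) ^ i * (n.choose i : ℤ) * ((i / q + 1).choose j : ℤ)
          = ((-1 : ℤ) ^ (n-i) * (-1) ^ (n-i)) * ((-1 : ℤ) ^ i * (n.choose i : ℤ)
              * ((i / q + 1).choose j : ℤ)) := by rw [hsq]; ring
        _ = (-1 : ℤ) ^ n * ((-1 : ℤ) ^ (n - i) * (n.choose i : ℤ)
              * ((i / q + 1).choose j : ℤ)) := by rw [hsplit]; ring
    rw [hUt]
    exact (hdvd j hj).mul_left _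
  -- conclude
  refine ⟨∑ j ∈ Finset.range (t + 1), zc j * (U j / (p : ℤ) ^ m), ?_⟩
  have hgoalexp : (max 0
      ⌈(((n : ℚ) - ((t : ℚ) + 1) * (p : ℚ) ^ s + 1) / (Nat.totient (p ^ s) : ℚ))⌉).toNat = m := by
    rw [← hq, ← hE]
    exact hexp
  rw [hgoalexp, hswap]
  push_cast
  rw [Finset.mul_sum]
  refine Finset.sum_congr rfl fun j hj => ?_
  rw [← hUcast j]
  have := Int.ediv_mul_cancel (hUdvd j hj)
  have hcancel : (p : ℤ) ^ m * (U j / (p : ℤ) ^ m) = U j := by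
    rw [mul_comm]
    exact Int.ediv_mul_cancel (hUdvd j hj)
  calc (zc j : ℚ) * ((U j : ℤ) : ℚ)
      = (zc j : ℚ) * (((p : ℤ) ^ m * (U j / (p : ℤ) ^ m) : ℤ) : ℚ) := by rw [hcancel]
    _ = (p : ℚ) ^ m * ((zc j : ℚ) * ((U j / (p : ℤ) ^ m : ℤ) : ℚ)) := by push_cast; ring
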